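/- Let X be a locally compact, Hausdorff, connected space. (I) Every quasi-linear functional ρ on C_c(X) with ‖ρ‖ < ∞ extends uniquely to a quasi-linear functional on C₀(X), and the extension has the same norm. (II) Conversely, every quasi-linear functional on C₀(X) with ‖ρ‖ < ∞ is the unique such extension of its restriction to C_c(X). -/

import Mathlib

open Set Filter Topology MeasureTheory
open scoped ENNReal BoundedContinuousFunction

universe u

/-- A topological measure on `X`: a set function on subsets of `X` (only its values on open
and closed sets matter), not identically `∞` on open/closed sets, satisfying (TM1)–(TM3). -/
structure TopMeasure (X : Type u) [TopologicalSpace X] where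
  toFun : Set X → ℝ≥0∞
  not_all_top : ∃ A : Set X, (IsOpen A ∨ IsClosed A) ∧ toFun A ≠ ∞
  tm1 : ∀ A B : Set X, Disjoint A B → (IsOpen A ∨ IsCompact A) → (IsOpen B ∨ IsCompact B) →
      (IsOpen (A ∪ B) ∨ IsCompact (A ∪ B)) → toFun (A ∪ B) = toFun A + toFun B
  tm2 : ∀ U : Set X, IsOpen U → toFun U = ⨆ K ∈ {K : Set X | IsCompact K ∧ K ⊆ U}, toFun K
  tm3 : ∀ F : Set X, IsClosed F → toFun F = ⨅ U ∈ {U : Set X | IsOpen U ∧ F ⊆ U}, toFun U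

/-- `μ` is compact-finite. -/
def TopMeasure.CompactFinite {X : Type u} [TopologicalSpace X] (μ : TopMeasure X) : Prop :=
  ∀ K : Set X, IsCompact K → μ.toFun K ≠ ∞

/-- The set of compactly supported continuous functions, inside `C_b(X)`. -/
def CcS (X : Type u) [TopologicalSpace X] : Set (X →ᵇ ℝ) :=
  {f | HasCompactSupport (f : X → ℝ)}

/-- The set of continuous functions vanishing at infinity, inside `C_b(X)`. -/
def C0S (X : Type u) [TopologicalSpace X] : Set (X →ᵇ ℝ) :=
  {f | Tendsto (f : X → ℝ) (cocompact X) (nhds 0)}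

/-- `𝔅` is a (non-unital) subalgebra of `C_b(X)`. -/
def IsSubalgS {X : Type u} [TopologicalSpace X] (𝔅 : Set (X →ᵇ ℝ)) : Prop :=
  (∀ f g : X →ᵇ ℝ, f ∈ 𝔅 → g ∈ 𝔅 → f + g ∈ 𝔅) ∧
  (∀ f g : X →ᵇ ℝ, f ∈ 𝔅 → g ∈ 𝔅 → f * g ∈ 𝔅) ∧
  (∀ (c : ℝ) (f : X →ᵇ ℝ), f ∈ 𝔅 → c • f ∈ 𝔅)

/-- The singly generated subalgebra `B(h)`: the smallest closed (in `𝔅`) subalgebra of `𝔅`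
containing `h`. -/
def sgen {X : Type u} [TopologicalSpace X] (𝔅 : Set (X →ᵇ ℝ)) (h : X →ᵇ ℝ) :
    Set (X →ᵇ ℝ) :=
  ⋂₀ {S : Set (X →ᵇ ℝ) | S ⊆ 𝔅 ∧ h ∈ S ∧
      (∀ f g : X →ᵇ ℝ, f ∈ S → g ∈ S → f + g ∈ S) ∧
      (∀ f g : X →ᵇ ℝ, f ∈ S → g ∈ S → f * g ∈ S) ∧
      (∀ (c : ℝ) (f : X →ᵇ ℝ), f ∈ S → c • f ∈ S) ∧
      IsClosed {x : ↥𝔅 | (x : X →ᵇ ℝ) ∈ S}}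

/-- A signed quasi-linear functional on `𝔅` (QI1), (QI2). -/
structure SignedQLF {X : Type u} [TopologicalSpace X] (𝔅 : Set (X →ᵇ ℝ)) where
  toFun : (X →ᵇ ℝ) → ℝ
  smul_eq : ∀ (a : ℝ) (f : X →ᵇ ℝ), f ∈ 𝔅 → toFun (a • f) = a * toFun f
  add_eq : ∀ h ∈ 𝔅, ∀ f g : X →ᵇ ℝ, f ∈ sgen 𝔅 h → g ∈ sgen 𝔅 h →
      toFun (f + g) = toFun f + toFun g

/-- A (positive) quasi-linear functional on `𝔅` (QI1)–(QI3). -/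
structure QLF {X : Type u} [TopologicalSpace X] (𝔅 : Set (X →ᵇ ℝ)) extends SignedQLF 𝔅 where
  pos : ∀ f : X →ᵇ ℝ, f ∈ 𝔅 → 0 ≤ f → 0 ≤ toFun f

/-- `‖ρ‖ = sup {ρ(f) : f ∈ 𝔅, 0 ≤ f ≤ 1}`, as an extended real number. -/
noncomputable def qnorm {X : Type u} [TopologicalSpace X] {𝔅 : Set (X →ᵇ ℝ)} (ρ : QLF 𝔅) :
    ℝ≥0∞ :=
  ⨆ f ∈ {f : X →ᵇ ℝ | f ∈ 𝔅 ∧ 0 ≤ f ∧ f ≤ 1}, ENNReal.ofReal (ρ.toFun f)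

/-- `m` is the measure `m_f` on `ℝ` associated with a finite topological measure `μ` and
`f ∈ C₀(X)` (case (A)): `m(W) = μ(f⁻¹(W))` for every open `W ⊆ ℝ`. -/
def IsMfA {X : Type u} [TopologicalSpace X] (μ : TopMeasure X) (f : X →ᵇ ℝ)
    (m : Measure ℝ) : Prop :=
  ∀ W : Set ℝ, IsOpen W → m W = μ.toFun ((f : X → ℝ) ⁻¹' W)

/-- `m` is the measure `m_f` on `ℝ` associated with a compact-finite topological measure `μ`
and `f ∈ C_c(X)` (case (B)): `m(W) = μ(f⁻¹(W \ {0}))` for every open `W ⊆ ℝ`. -/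
def IsMfB {X : Type u} [TopologicalSpace X] (μ : TopMeasure X) (f : X →ᵇ ℝ)
    (m : Measure ℝ) : Prop :=
  ∀ W : Set ℝ, IsOpen W → m W = μ.toFun ((f : X → ℝ) ⁻¹' (W \ {0}))

/-- The support of a (Borel) measure on `ℝ`. -/
def msupp (m : Measure ℝ) : Set ℝ := {x : ℝ | ∀ U ∈ nhds x, 0 < m U}

/-- The set function `μ_ρ` on open sets:
`μ_ρ(U) = sup {ρ(f) : f ∈ C_c(X), 0 ≤ f ≤ 1, supp f ⊆ U}`. -/
noncomputable def muO {X : Type u} [TopologicalSpace X] {𝔅 : Set (X →ᵇ ℝ)} (ρ : QLF 𝔅)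
    (U : Set X) : ℝ≥0∞ :=
  ⨆ f ∈ {f : X →ᵇ ℝ | f ∈ CcS X ∧ 0 ≤ f ∧ f ≤ 1 ∧ tsupport (f : X → ℝ) ⊆ U},
    ENNReal.ofReal (ρ.toFun f)

/-- The set function `μ_ρ` on closed sets: `μ_ρ(F) = inf {μ_ρ(U) : U open, F ⊆ U}`. -/
noncomputable def muC {X : Type u} [TopologicalSpace X] {𝔅 : Set (X →ᵇ ℝ)} (ρ : QLF 𝔅)
    (F : Set X) : ℝ≥0∞ :=
  ⨅ U ∈ {U : Set X | IsOpen U ∧ F ⊆ U}, muO ρ U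

open Classical in
/-- The set function `μ_ρ`. -/
noncomputable def muR {X : Type u} [TopologicalSpace X] {𝔅 : Set (X →ᵇ ℝ)} (ρ : QLF 𝔅) :
    Set X → ℝ≥0∞ :=
  fun A => if IsOpen A then muO ρ A else muC ρ A

/-- `ρ = ρ_μ` on `C₀(X)` (case (A)): for every `f ∈ C₀(X)` and every measure `m_f`
associated with `μ` and `f`, `ρ(f) = ∫_ℝ id dm_f`. -/
def ReprA {X : Type u} [TopologicalSpace X] {𝔅 : Set (X →ᵇ ℝ)} (μ : TopMeasure X)
    (ρ : QLF 𝔅) : Prop :=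
  ∀ f ∈ C0S X, ∀ m : Measure ℝ, IsMfA μ f m → ρ.toFun f = ∫ t, t ∂m

/-- `ρ = ρ_μ` on `C_c(X)` (case (B)). -/
def ReprB {X : Type u} [TopologicalSpace X] {𝔅 : Set (X →ᵇ ℝ)} (μ : TopMeasure X)
    (ρ : QLF 𝔅) : Prop :=
  ∀ f ∈ CcS X, ∀ m : Measure ℝ, IsMfB μ f m → ρ.toFun f = ∫ t, t ∂m

/-! Let `τ_ε t = sign t · max (|t| - ε) 0` (soft thresholding). For `f ∈ C₀(X)` and `ε > 0`,
`τ_ε ∘ f` has compact support, lies within `ε` of `f`, and `τ_a ∘ f = τ_{a-b} ∘ (τ_b ∘ f)`.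
On a singly generated subalgebra `B(k)` a bounded quasi-linear functional is linear and
positive, hence `‖ρ‖`-Lipschitz there. So `ε ↦ ρ(τ_ε ∘ f)` is Lipschitz on `(0, ∞)`, and the
extension of `ρ` is its limit at `0`. The same estimate inside `B(f) ⊆ C₀(X)` shows that every
bounded quasi-linear functional on `C₀(X)` is this limit of its values on `C_c(X)`, which gives
uniqueness. For additivity on `B(h) ⊆ C₀(X)`: elements of `B(h)` are small where `h` is small,
and `B(h)` multiplies `B(τ_δ ∘ h) ⊆ C_c(X)` into itself; hence for small `δ` the functions
`τ_ε ∘ f`, `τ_ε ∘ g`, `τ_ε ∘ (f + g)` all lie in the single subalgebra `B(τ_δ ∘ h)`, where `ρ`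
is additive. -/

open BoundedContinuousFunction

def softThreshold (ε : ℝ) : C(ℝ, ℝ) := ⟨fun t => t - max (-ε) (min ε t), by fun_prop⟩

section SoftThreshold

variable {ε t : ℝ}

lemma softThreshold_apply (ε t : ℝ) : softThreshold ε t = t - max (-ε) (min ε t) := rfl

lemma softThreshold_eq_zero (h : |t| ≤ ε) : softThreshold ε t = 0 := by
  rw [abs_le] at h
  simp only [softThreshold_apply, max_def, min_def]
  split_ifs <;> linarith

lemma softThreshold_zero (hε : 0 ≤ ε) : softThreshold ε 0 = 0 :=
  softThreshold_eq_zero (by simpa using hε)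

lemma abs_softThreshold_sub_self_le (hε : 0 ≤ ε) (t : ℝ) : |softThreshold ε t - t| ≤ ε := by
  simp only [softThreshold_apply, max_def, min_def]
  split_ifs <;> rw [abs_le] <;> constructor <;> linarith

lemma abs_softThreshold_sub_softThreshold_le (a b t : ℝ) :
    |softThreshold a t - softThreshold b t| ≤ |a - b| := by
  have := le_abs_self (a - b)
  have := neg_abs_le (a - b)
  simp only [softThreshold_apply, max_def, min_def]
  split_ifs <;> rw [abs_le] <;> constructor <;> linarith

lemma softThreshold_softThreshold {a b : ℝ} (ha : 0 ≤ a) (hb : 0 ≤ b) (t : ℝ) :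
    softThreshold a (softThreshold b t) = softThreshold (a + b) t := by
  simp only [softThreshold_apply, max_def, min_def]
  split_ifs <;> linarith

lemma softThreshold_nonneg (hε : 0 ≤ ε) (ht : 0 ≤ t) : 0 ≤ softThreshold ε t := by
  simp only [softThreshold_apply, max_def, min_def]
  split_ifs <;> linarith

lemma softThreshold_le_self (hε : 0 ≤ ε) (ht : 0 ≤ t) : softThreshold ε t ≤ t := by
  simp only [softThreshold_apply, max_def, min_def]
  split_ifs <;> linarith

lemma abs_sub_le_abs_softThreshold (hε : 0 ≤ ε) (t : ℝ) : |t| - ε ≤ |softThreshold ε t| := by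
  linarith [abs_sub_abs_le_abs_sub t (softThreshold ε t), abs_sub_comm t (softThreshold ε t),
    abs_softThreshold_sub_self_le hε t]

lemma softThreshold_mul_of_pos {a : ℝ} (ha : 0 < a) (ε t : ℝ) :
    softThreshold (a * ε) (a * t) = a * softThreshold ε t := by
  rw [softThreshold_apply, softThreshold_apply, ← mul_min_of_nonneg _ _ ha.le, ← mul_neg,
    ← mul_max_of_nonneg _ _ ha.le, mul_sub]

lemma softThreshold_neg (hε : 0 ≤ ε) (t : ℝ) : softThreshold ε (-t) = -softThreshold ε t := by
  simp only [softThreshold_apply, max_def, min_def]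
  split_ifs <;> linarith

lemma softThreshold_mul {a : ℝ} (ha : a ≠ 0) (hε : 0 ≤ ε) (t : ℝ) :
    softThreshold ε (a * t) = a * softThreshold (ε / |a|) t := by
  obtain ⟨e, he, rfl⟩ : ∃ e, 0 ≤ e ∧ ε = |a| * e := ⟨ε / |a|, by positivity, by field_simp⟩
  rw [mul_div_cancel_left₀ _ (abs_ne_zero.2 ha)]
  rcases ha.lt_or_gt with ha | ha
  · rw [abs_of_neg ha, show a * t = -a * -t by ring, softThreshold_mul_of_pos (neg_pos.2 ha),
      softThreshold_neg he]
    ring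
  · rw [abs_of_pos ha, softThreshold_mul_of_pos ha]

lemma mul_softThreshold (hε : 0 ≤ ε) (t : ℝ) :
    t * softThreshold ε t = softThreshold ε t * softThreshold ε t + ε * |softThreshold ε t| := by
  simp only [softThreshold_apply, max_def, min_def]
  split_ifs <;> first
    | (exfalso; linarith)
    | (rw [abs_of_nonneg (by linarith)]; ring)
    | (rw [abs_of_nonpos (by linarith)]; ring)

end SoftThreshold

section

variable {X : Type u} [TopologicalSpace X]

lemma ContinuousMap.exists_bound_comp (θ : C(ℝ, ℝ)) (f : X →ᵇ ℝ) : ∃ C, ∀ x, ‖θ (f x)‖ ≤ C := by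
  obtain ⟨C, hC⟩ := (isCompact_Icc (a := -‖f‖) (b := ‖f‖)).exists_bound_of_continuousOn
    θ.continuous.continuousOn
  exact ⟨C, fun x => hC _ (abs_le.1 (by simpa using f.norm_coe_le_norm x))⟩

noncomputable def ContinuousMap.compBCF (θ : C(ℝ, ℝ)) (f : X →ᵇ ℝ) : X →ᵇ ℝ :=
  ofNormedAddCommGroup (θ ∘ f) (θ.continuous.comp f.continuous) _
    (θ.exists_bound_comp f).choose_spec

def IsCompClosed (𝔅 : Set (X →ᵇ ℝ)) : Prop :=
  ∀ θ : C(ℝ, ℝ), θ 0 = 0 → ∀ f ∈ 𝔅, θ.compBCF f ∈ 𝔅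

lemma ContinuousMap.coe_compBCF (θ : C(ℝ, ℝ)) (f : X →ᵇ ℝ) : ⇑(θ.compBCF f) = θ ∘ f := rfl

@[simp]
lemma ContinuousMap.compBCF_apply (θ : C(ℝ, ℝ)) (f : X →ᵇ ℝ) (x : X) :
    θ.compBCF f x = θ (f x) := rfl

lemma ContinuousMap.norm_compBCF_le {θ : C(ℝ, ℝ)} (hθ : ∀ t, |θ t| ≤ |t|) (f : X →ᵇ ℝ) :
    ‖θ.compBCF f‖ ≤ ‖f‖ :=
  (BoundedContinuousFunction.norm_le (norm_nonneg f)).2 fun x =>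
    (hθ (f x)).trans (f.norm_coe_le_norm x)

section Algebras

lemma zero_mem_CcS : (0 : X →ᵇ ℝ) ∈ CcS X := by
  show HasCompactSupport ⇑(0 : X →ᵇ ℝ)
  rw [coe_zero]
  exact HasCompactSupport.zero

lemma mul_mem_CcS (f : X →ᵇ ℝ) {g : X →ᵇ ℝ} (hg : g ∈ CcS X) : f * g ∈ CcS X := by
  show HasCompactSupport ⇑(f * g)
  rw [coe_mul]
  exact hg.mul_left

lemma isSubalgS_CcS : IsSubalgS (CcS X) := by
  refine ⟨fun f g hf hg => ?_, fun f _ _ hg => mul_mem_CcS f hg, fun c f hf => ?_⟩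
  · show HasCompactSupport ⇑(f + g)
    rw [coe_add]
    exact hf.add hg
  · show HasCompactSupport ⇑(c • f)
    exact hf.comp_left (g := (c * ·)) (mul_zero c)

lemma isCompClosed_CcS : IsCompClosed (CcS X) := fun θ hθ f hf => by
  show HasCompactSupport ⇑(θ.compBCF f)
  rw [ContinuousMap.coe_compBCF]
  exact hf.comp_left hθ

lemma isSubalgS_C0S : IsSubalgS (C0S X) := by
  refine ⟨fun f g hf hg => ?_, fun f g hf hg => ?_, fun c f hf => ?_⟩
  · have := hf.add hg
    rwa [add_zero] at this
  · have := hf.mul hg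
    rwa [mul_zero] at this
  · have := hf.const_mul c
    rwa [mul_zero] at this

lemma isCompClosed_C0S : IsCompClosed (C0S X) := fun θ hθ f hf => by
  show Tendsto ⇑(θ.compBCF f) _ _
  simpa [ContinuousMap.coe_compBCF, hθ] using (θ.continuous.tendsto 0).comp hf

lemma CcS_subset_C0S : CcS X ⊆ C0S X := fun _ hf => HasCompactSupport.is_zero_at_infty hf

lemma compBCF_mem_CcS {θ : C(ℝ, ℝ)} {ε : ℝ} (hε : 0 < ε) (hθ : ∀ t, |t| ≤ ε → θ t = 0)
    {f : X →ᵇ ℝ} (hf : f ∈ C0S X) : θ.compBCF f ∈ CcS X := by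
  obtain ⟨K, hK, hKf⟩ := mem_cocompact.1 (Metric.tendsto_nhds.1 hf ε hε)
  have hsupp : tsupport (θ.compBCF f) ⊆ {x | ε ≤ |f x|} := by
    refine closure_minimal (fun x hx => ?_) (isClosed_le continuous_const f.continuous.abs)
    by_contra hsmall
    exact hx (hθ _ (not_le.1 hsmall).le)
  refine hK.of_isClosed_subset (isClosed_tsupport _) (hsupp.trans fun x hx => ?_)
  by_contra hxK
  have := hKf hxK
  simp only [mem_ofPred_eq, Real.dist_eq, sub_zero] at this hx
  linarith

end Algebras

section SinglyGenerated

variable {𝔅 : Set (X →ᵇ ℝ)} {k f g u : X →ᵇ ℝ}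

lemma sgen_induction (h𝔅 : IsSubalgS 𝔅) (hk : k ∈ 𝔅) {P : (X →ᵇ ℝ) → Prop} (base : P k)
    (add : ∀ f ∈ 𝔅, ∀ g ∈ 𝔅, P f → P g → P (f + g))
    (mul : ∀ f ∈ 𝔅, ∀ g ∈ 𝔅, P f → P g → P (f * g))
    (smul : ∀ (c : ℝ), ∀ f ∈ 𝔅, P f → P (c • f))
    (closed : IsClosed {x : 𝔅 | P x}) (hf : f ∈ sgen 𝔅 k) : P f := by
  refine (sInter_subset_of_mem (t := {f | f ∈ 𝔅 ∧ P f}) ?_ hf).2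
  refine ⟨fun _ h => h.1, ⟨hk, base⟩,
    fun f g hf hg => ⟨h𝔅.1 f g hf.1 hg.1, add f hf.1 g hg.1 hf.2 hg.2⟩,
    fun f g hf hg => ⟨h𝔅.2.1 f g hf.1 hg.1, mul f hf.1 g hg.1 hf.2 hg.2⟩,
    fun c f hf => ⟨h𝔅.2.2 c f hf.1, smul c f hf.1 hf.2⟩, ?_⟩
  simpa using closed

lemma mem_sgen_self : k ∈ sgen 𝔅 k := mem_sInter.2 fun _ hS => hS.2.1

lemma sgen_subset (h𝔅 : IsSubalgS 𝔅) (hk : k ∈ 𝔅) : sgen 𝔅 k ⊆ 𝔅 :=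
  sInter_subset_of_mem ⟨subset_rfl, hk, h𝔅.1, h𝔅.2.1, h𝔅.2.2, by simp⟩

lemma add_mem_sgen (hf : f ∈ sgen 𝔅 k) (hg : g ∈ sgen 𝔅 k) : f + g ∈ sgen 𝔅 k :=
  mem_sInter.2 fun S hS => hS.2.2.1 f g (mem_sInter.1 hf S hS) (mem_sInter.1 hg S hS)

lemma mul_mem_sgen (hf : f ∈ sgen 𝔅 k) (hg : g ∈ sgen 𝔅 k) : f * g ∈ sgen 𝔅 k :=
  mem_sInter.2 fun S hS => hS.2.2.2.1 f g (mem_sInter.1 hf S hS) (mem_sInter.1 hg S hS)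

lemma smul_mem_sgen (c : ℝ) (hf : f ∈ sgen 𝔅 k) : c • f ∈ sgen 𝔅 k :=
  mem_sInter.2 fun S hS => hS.2.2.2.2.1 c f (mem_sInter.1 hf S hS)

lemma sub_mem_sgen (hf : f ∈ sgen 𝔅 k) (hg : g ∈ sgen 𝔅 k) : f - g ∈ sgen 𝔅 k := by
  rw [sub_eq_add_neg, ← neg_one_smul ℝ g]
  exact add_mem_sgen hf (smul_mem_sgen _ hg)

lemma pow_succ_mem_sgen (hu : u ∈ sgen 𝔅 k) (n : ℕ) : u ^ (n + 1) ∈ sgen 𝔅 k := by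
  induction n with
  | zero => simpa using hu
  | succ n ih => rw [pow_succ]; exact mul_mem_sgen ih hu

lemma isClosed_sgen : IsClosed {x : 𝔅 | (x : X →ᵇ ℝ) ∈ sgen 𝔅 k} := by
  simp only [sgen, mem_sInter, ofPred_forall]
  exact isClosed_biInter fun S hS => hS.2.2.2.2.2

open Polynomial in
lemma X_mul_compBCF_mem_sgen (hu : u ∈ sgen 𝔅 k) (p : ℝ[X]) :
    (Polynomial.X * p).toContinuousMap.compBCF u ∈ sgen 𝔅 k := by
  induction p using Polynomial.induction_on' with
  | add p q hp hq =>
    convert add_mem_sgen hp hq using 1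
    ext x
    simp [mul_add]
  | monomial n a =>
    convert smul_mem_sgen a (pow_succ_mem_sgen hu n) using 1
    ext x
    simp [pow_succ]

open Polynomial in
lemma compBCF_mem_sgen (h𝔅 : IsSubalgS 𝔅) (hcomp : IsCompClosed 𝔅) (hk : k ∈ 𝔅)
    {θ : C(ℝ, ℝ)} (hθ : θ 0 = 0) (hu : u ∈ sgen 𝔅 k) : θ.compBCF u ∈ sgen 𝔅 k := by
  have hv : θ.compBCF u ∈ 𝔅 := hcomp θ hθ u (sgen_subset h𝔅 hk hu)
  suffices (⟨_, hv⟩ : 𝔅) ∈ closure {x : 𝔅 | (x : X →ᵇ ℝ) ∈ sgen 𝔅 k} from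
    isClosed_sgen.closure_subset this
  refine Metric.mem_closure_iff.2 fun ε hε => ?_
  obtain ⟨p, hp⟩ := exists_polynomial_near_of_continuousOn (-‖u‖) ‖u‖ θ
    θ.continuous.continuousOn (ε / 4) (by positivity)
  -- `p - p(0)` still approximates `θ` because `θ(0) = 0`, and it is divisible by `X`.
  obtain ⟨q, hq⟩ : Polynomial.X ∣ p - Polynomial.C (p.eval 0) :=
    X_dvd_iff.2 (by simp [coeff_zero_eq_eval_zero])
  have hqu := X_mul_compBCF_mem_sgen hu q
  refine ⟨⟨_, sgen_subset h𝔅 hk hqu⟩, hqu, ?_⟩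
  rw [Subtype.dist_eq, dist_eq_norm]
  refine ((BoundedContinuousFunction.norm_le (by positivity)).2 fun x => ?_).trans_lt
    (by linarith : ε / 2 < ε)
  have hx : u x ∈ Icc (-‖u‖) ‖u‖ := abs_le.1 (by simpa using u.norm_coe_le_norm x)
  have h1 := hp _ hx
  have h0 := hp 0 ⟨by simp, norm_nonneg u⟩
  rw [hθ] at h0
  simp only [BoundedContinuousFunction.coe_sub, Pi.sub_apply, ContinuousMap.compBCF_apply, ← hq,
    toContinuousMap_apply, eval_sub, eval_C, Real.norm_eq_abs]
  calc |θ (u x) - (p.eval (u x) - p.eval 0)|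
      = |(p.eval 0 - 0) - (p.eval (u x) - θ (u x))| := by ring_nf
    _ ≤ |p.eval 0 - 0| + |p.eval (u x) - θ (u x)| := abs_sub _ _
    _ ≤ ε / 2 := by linarith

end SinglyGenerated

lemma tendsto_nhdsGT_zero_of_abs_sub_le_mul {F : ℝ → ℝ} {L C : ℝ}
    (h : ∀ ε > 0, |F ε - L| ≤ C * ε) : Tendsto F (𝓝[>] 0) (𝓝 L) := by
  rw [tendsto_iff_norm_sub_tendsto_zero]
  refine squeeze_zero' (.of_forall fun _ => norm_nonneg _) (eventually_nhdsWithin_of_forall h) ?_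
  have : Tendsto (fun ε : ℝ => C * ε) (𝓝 0) (𝓝 0) := by
    simpa using (continuous_const_mul C).tendsto 0
  exact this.mono_left nhdsWithin_le_nhds

section Bounded

variable {𝔅 : Set (X →ᵇ ℝ)} (ρ : QLF 𝔅) {k f u v : X →ᵇ ℝ}

lemma QLF.apply_zero (hk : k ∈ 𝔅) : ρ.toFun 0 = 0 := by
  simpa using ρ.smul_eq 0 k hk

lemma QLF.ofReal_apply_le_qnorm (hf : f ∈ 𝔅) (h0 : 0 ≤ f) (h1 : f ≤ 1) :
    ENNReal.ofReal (ρ.toFun f) ≤ qnorm ρ :=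
  le_iSup₂ (f := fun g (_ : g ∈ {g | g ∈ 𝔅 ∧ 0 ≤ g ∧ g ≤ 1}) => ENNReal.ofReal (ρ.toFun g))
    f ⟨hf, h0, h1⟩

lemma QLF.apply_le_qnorm_toReal (hq : qnorm ρ ≠ ∞) (hf : f ∈ 𝔅) (h0 : 0 ≤ f) (h1 : f ≤ 1) :
    ρ.toFun f ≤ (qnorm ρ).toReal :=
  (ENNReal.ofReal_le_iff_le_toReal hq).1 (ρ.ofReal_apply_le_qnorm hf h0 h1)

lemma QLF.apply_le_qnorm_toReal_mul_norm (h𝔅 : IsSubalgS 𝔅) (hq : qnorm ρ ≠ ∞) (hf : f ∈ 𝔅)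
    (h0 : 0 ≤ f) : ρ.toFun f ≤ (qnorm ρ).toReal * ‖f‖ := by
  rcases (norm_nonneg f).eq_or_lt with hn | hn
  · rw [← hn, norm_eq_zero.1 hn.symm, ρ.apply_zero hf, mul_zero]
  have hf' : ‖f‖⁻¹ • f ∈ 𝔅 := h𝔅.2.2 _ f hf
  have h0' : 0 ≤ ‖f‖⁻¹ • f := fun x => by simpa using mul_nonneg (inv_nonneg.2 hn.le) (h0 x)
  have h1' : ‖f‖⁻¹ • f ≤ 1 := fun x => by
    simpa using (inv_mul_le_one₀ hn).2 ((le_abs_self _).trans (by simpa using f.norm_coe_le_norm x))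
  calc ρ.toFun f = ρ.toFun (‖f‖ • ‖f‖⁻¹ • f) := by rw [smul_smul, mul_inv_cancel₀ hn.ne', one_smul]
    _ = ‖f‖ * ρ.toFun (‖f‖⁻¹ • f) := ρ.smul_eq _ _ hf'
    _ ≤ ‖f‖ * (qnorm ρ).toReal := by gcongr; exact ρ.apply_le_qnorm_toReal hq hf' h0' h1'
    _ = (qnorm ρ).toReal * ‖f‖ := mul_comm _ _

lemma QLF.abs_apply_le (h𝔅 : IsSubalgS 𝔅) (hcomp : IsCompClosed 𝔅) (hq : qnorm ρ ≠ ∞)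
    (hk : k ∈ 𝔅) (hu : u ∈ sgen 𝔅 k) : |ρ.toFun u| ≤ (qnorm ρ).toReal * ‖u‖ := by
  -- `u = u⁺ - u⁻` inside `B(k)`, and `ρ` is additive there.
  have hpart : ∀ θ : C(ℝ, ℝ), θ 0 = 0 → (∀ t, 0 ≤ θ t) → (∀ t, |θ t| ≤ |t|) →
      θ.compBCF u ∈ sgen 𝔅 k ∧ 0 ≤ ρ.toFun (θ.compBCF u) ∧
        ρ.toFun (θ.compBCF u) ≤ (qnorm ρ).toReal * ‖u‖ := fun θ hθ0 hθ hθu => by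
    have hmem := compBCF_mem_sgen h𝔅 hcomp hk hθ0 hu
    have hpos : 0 ≤ θ.compBCF u := fun x => by simpa using hθ (u x)
    refine ⟨hmem, ρ.pos _ (sgen_subset h𝔅 hk hmem) hpos, ?_⟩
    exact (ρ.apply_le_qnorm_toReal_mul_norm h𝔅 hq (sgen_subset h𝔅 hk hmem) hpos).trans
      (by gcongr; exact ContinuousMap.norm_compBCF_le hθu u)
  let pos : C(ℝ, ℝ) := ⟨fun t => max t 0, by fun_prop⟩
  let neg : C(ℝ, ℝ) := ⟨fun t => max (-t) 0, by fun_prop⟩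
  obtain ⟨hp, hp0, hp1⟩ := hpart pos (by simp [pos]) (fun t => by simp [pos])
    (fun t => by simpa [pos] using abs_max_le_max_abs_abs (a := t) (b := 0))
  obtain ⟨hm, hm0, hm1⟩ := hpart neg (by simp [neg]) (fun t => by simp [neg])
    (fun t => by simpa [neg] using abs_max_le_max_abs_abs (a := -t) (b := 0))
  have hsplit : u = pos.compBCF u + (-1 : ℝ) • neg.compBCF u := by
    ext x
    simp [pos, neg, ← sub_eq_add_neg]
  have : ρ.toFun u = ρ.toFun (pos.compBCF u) - ρ.toFun (neg.compBCF u) := by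
    conv_lhs => rw [hsplit]
    rw [ρ.add_eq k hk _ _ hp (smul_mem_sgen _ hm),
      ρ.smul_eq _ _ (sgen_subset h𝔅 hk hm)]
    ring
  rw [this, abs_le]
  constructor <;> linarith

lemma QLF.abs_apply_sub_apply_le (h𝔅 : IsSubalgS 𝔅) (hcomp : IsCompClosed 𝔅)
    (hq : qnorm ρ ≠ ∞) (hk : k ∈ 𝔅) (hu : u ∈ sgen 𝔅 k) (hv : v ∈ sgen 𝔅 k) :
    |ρ.toFun u - ρ.toFun v| ≤ (qnorm ρ).toReal * ‖u - v‖ := by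
  have huv := sub_mem_sgen hu hv
  rw [← add_sub_cancel v u, ρ.add_eq k hk _ _ hv huv, add_sub_cancel_left, add_sub_cancel_left]
  exact ρ.abs_apply_le h𝔅 hcomp hq hk huv

end Bounded

noncomputable def shrink (ε : ℝ) (f : X →ᵇ ℝ) : X →ᵇ ℝ := (softThreshold ε).compBCF f

section Shrink

variable {𝔅 : Set (X →ᵇ ℝ)} {k f u : X →ᵇ ℝ} {ε : ℝ}

@[simp]
lemma shrink_apply (ε : ℝ) (f : X →ᵇ ℝ) (x : X) : shrink ε f x = softThreshold ε (f x) := rfl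

lemma shrink_mem_sgen (h𝔅 : IsSubalgS 𝔅) (hcomp : IsCompClosed 𝔅) (hk : k ∈ 𝔅) (hε : 0 ≤ ε)
    (hu : u ∈ sgen 𝔅 k) : shrink ε u ∈ sgen 𝔅 k :=
  compBCF_mem_sgen h𝔅 hcomp hk (softThreshold_zero hε) hu

lemma shrink_mem_CcS (hf : f ∈ C0S X) (hε : 0 < ε) : shrink ε f ∈ CcS X :=
  compBCF_mem_CcS hε (fun _ => softThreshold_eq_zero) hf

lemma norm_shrink_sub_self_le (hε : 0 ≤ ε) (f : X →ᵇ ℝ) : ‖shrink ε f - f‖ ≤ ε :=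
  (BoundedContinuousFunction.norm_le hε).2 fun x => by
    simpa using abs_softThreshold_sub_self_le hε (f x)

lemma norm_shrink_sub_shrink_le (a b : ℝ) (f : X →ᵇ ℝ) : ‖shrink a f - shrink b f‖ ≤ |a - b| :=
  (BoundedContinuousFunction.norm_le (abs_nonneg _)).2 fun x => by
    simpa using abs_softThreshold_sub_softThreshold_le a b (f x)

lemma shrink_shrink {a b : ℝ} (ha : 0 ≤ a) (hb : 0 ≤ b) (f : X →ᵇ ℝ) :
    shrink a (shrink b f) = shrink (a + b) f := by
  ext x
  simp [softThreshold_softThreshold ha hb]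

lemma shrink_smul {a : ℝ} (ha : a ≠ 0) (hε : 0 ≤ ε) (f : X →ᵇ ℝ) :
    shrink ε (a • f) = a • shrink (ε / |a|) f := by
  ext x
  simp [softThreshold_mul ha hε]

lemma shrink_nonneg (hε : 0 ≤ ε) (hf : 0 ≤ f) : 0 ≤ shrink ε f := fun x => by
  simpa using softThreshold_nonneg hε (hf x)

lemma shrink_le_one (hε : 0 ≤ ε) (h0 : 0 ≤ f) (h1 : f ≤ 1) : shrink ε f ≤ 1 := fun x => by
  simpa using (softThreshold_le_self hε (h0 x)).trans (h1 x)

end Shrink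

lemma QLF.tendsto_apply_shrink {𝔅 : Set (X →ᵇ ℝ)} (h𝔅 : IsSubalgS 𝔅) (hcomp : IsCompClosed 𝔅)
    (ρ : QLF 𝔅) (hq : qnorm ρ ≠ ∞) {f : X →ᵇ ℝ} (hf : f ∈ 𝔅) :
    Tendsto (fun ε => ρ.toFun (shrink ε f)) (𝓝[>] 0) (𝓝 (ρ.toFun f)) :=
  tendsto_nhdsGT_zero_of_abs_sub_le_mul fun ε hε =>
    (ρ.abs_apply_sub_apply_le h𝔅 hcomp hq hf
      (shrink_mem_sgen h𝔅 hcomp hf hε.le mem_sgen_self) mem_sgen_self).trans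
      (by gcongr; exact norm_shrink_sub_self_le hε.le f)

section Extension

variable (ρ : QLF (CcS X)) {f : X →ᵇ ℝ}

lemma QLF.abs_apply_shrink_sub_apply_shrink_le (hq : qnorm ρ ≠ ∞) (hf : f ∈ C0S X) {a b : ℝ}
    (ha : 0 < a) (hb : 0 < b) :
    |ρ.toFun (shrink a f) - ρ.toFun (shrink b f)| ≤ (qnorm ρ).toReal * |a - b| := by
  wlog hab : b ≤ a generalizing a b
  · rw [abs_sub_comm, abs_sub_comm a]
    exact this hb ha (le_of_not_ge hab)
  have hk := shrink_mem_CcS hf hb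
  have hu : shrink a f ∈ sgen (CcS X) (shrink b f) := by
    simpa [shrink_shrink (sub_nonneg.2 hab) hb.le] using
      shrink_mem_sgen isSubalgS_CcS isCompClosed_CcS hk (sub_nonneg.2 hab) mem_sgen_self
  exact (ρ.abs_apply_sub_apply_le isSubalgS_CcS isCompClosed_CcS hq hk hu mem_sgen_self).trans
    (by gcongr; exact norm_shrink_sub_shrink_le a b f)

lemma QLF.exists_tendsto_apply_shrink (hq : qnorm ρ ≠ ∞) (hf : f ∈ C0S X) :
    ∃ L, Tendsto (fun ε => ρ.toFun (shrink ε f)) (𝓝[>] 0) (𝓝 L) := by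
  have hlip : LipschitzOnWith (qnorm ρ).toNNReal (fun ε => ρ.toFun (shrink ε f)) (Ioi 0) :=
    .of_dist_le_mul fun a ha b hb => by
      simpa [Real.dist_eq, ENNReal.coe_toNNReal_eq_toReal] using
        ρ.abs_apply_shrink_sub_apply_shrink_le hq hf ha hb
  obtain ⟨F, hF, hFeq⟩ := hlip.extend_real
  refine ⟨F 0, ((hF.continuous.tendsto 0).mono_left nhdsWithin_le_nhds).congr' ?_⟩
  exact eventually_nhdsWithin_of_forall fun ε hε => (hFeq hε).symm

noncomputable def QLF.extendFun (f : X →ᵇ ℝ) : ℝ :=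
  limUnder (𝓝[>] 0) fun ε => ρ.toFun (shrink ε f)

lemma QLF.tendsto_extendFun (hq : qnorm ρ ≠ ∞) (hf : f ∈ C0S X) :
    Tendsto (fun ε => ρ.toFun (shrink ε f)) (𝓝[>] 0) (𝓝 (ρ.extendFun f)) := by
  obtain ⟨L, hL⟩ := ρ.exists_tendsto_apply_shrink hq hf
  rwa [QLF.extendFun, hL.limUnder_eq]

lemma QLF.extendFun_eq_apply (hq : qnorm ρ ≠ ∞) (hf : f ∈ CcS X) :
    ρ.extendFun f = ρ.toFun f :=
  tendsto_nhds_unique (ρ.tendsto_extendFun hq (CcS_subset_C0S hf))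
    (ρ.tendsto_apply_shrink isSubalgS_CcS isCompClosed_CcS hq hf)

lemma QLF.extendFun_nonneg (hq : qnorm ρ ≠ ∞) (hf : f ∈ C0S X) (h0 : 0 ≤ f) :
    0 ≤ ρ.extendFun f :=
  ge_of_tendsto (ρ.tendsto_extendFun hq hf) <| eventually_nhdsWithin_of_forall fun _ hε =>
    ρ.pos _ (shrink_mem_CcS hf hε) (shrink_nonneg (le_of_lt hε) h0)

lemma QLF.extendFun_le_qnorm_toReal (hq : qnorm ρ ≠ ∞) (hf : f ∈ C0S X) (h0 : 0 ≤ f)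
    (h1 : f ≤ 1) : ρ.extendFun f ≤ (qnorm ρ).toReal :=
  le_of_tendsto (ρ.tendsto_extendFun hq hf) <| eventually_nhdsWithin_of_forall fun _ hε =>
    ρ.apply_le_qnorm_toReal hq (shrink_mem_CcS hf hε) (shrink_nonneg (le_of_lt hε) h0)
      (shrink_le_one (le_of_lt hε) h0 h1)

lemma QLF.extendFun_smul (hq : qnorm ρ ≠ ∞) (a : ℝ) (hf : f ∈ C0S X) :
    ρ.extendFun (a • f) = a * ρ.extendFun f := by
  rcases eq_or_ne a 0 with rfl | ha
  · rw [zero_smul, zero_mul, ρ.extendFun_eq_apply hq zero_mem_CcS, ρ.apply_zero zero_mem_CcS]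
  have hscale : Tendsto (fun ε => ε / |a|) (𝓝[>] 0) (𝓝[>] 0) :=
    tendsto_nhdsWithin_iff.2 ⟨((continuous_id.div_const _).tendsto' 0 0 (zero_div _)).mono_left
      nhdsWithin_le_nhds, eventually_nhdsWithin_of_forall fun ε hε =>
        div_pos hε (abs_pos.2 ha)⟩
  refine tendsto_nhds_unique (ρ.tendsto_extendFun hq (isSubalgS_C0S.2.2 a f hf))
    ((((ρ.tendsto_extendFun hq hf).comp hscale).const_mul a).congr'
      (eventually_nhdsWithin_of_forall fun ε hε => ?_))
  rw [Function.comp_apply, ← ρ.smul_eq a _ (shrink_mem_CcS hf (div_pos hε (abs_pos.2 ha))),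
    ← shrink_smul ha (le_of_lt hε)]

end Extension

section Multipliers

variable {𝔅 : Set (X →ᵇ ℝ)} {h k f g u : X →ᵇ ℝ} {δ ε : ℝ}

lemma tendsto_comap_of_mem_sgen (h𝔅 : IsSubalgS 𝔅) (hk : k ∈ 𝔅) (hf : f ∈ sgen 𝔅 k) :
    Tendsto f (comap k (𝓝 0)) (𝓝 0) := by
  refine sgen_induction h𝔅 hk (P := fun f => Tendsto f (comap k (𝓝 0)) (𝓝 0)) tendsto_comap
    (fun f _ g _ hf hg => by have := hf.add hg; rwa [add_zero] at this)
    (fun f _ g _ hf hg => by have := hf.mul hg; rwa [mul_zero] at this)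
    (fun c f _ hf => by have := hf.const_mul c; rwa [mul_zero] at this) ?_ hf
  refine isClosed_of_closure_subset fun x hx => Metric.tendsto_nhds.2 fun ε hε => ?_
  obtain ⟨y, hy, hxy⟩ := Metric.mem_closure_iff.1 hx (ε / 2) (half_pos hε)
  filter_upwards [Metric.tendsto_nhds.1 hy (ε / 2) (half_pos hε)] with z hz
  calc dist (x.1 z) 0 ≤ dist (x.1 z) (y.1 z) + dist (y.1 z) 0 := dist_triangle _ _ _
    _ < ε / 2 + ε / 2 := add_lt_add_of_le_of_lt ((dist_coe_le_dist z).trans hxy.le) hz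
    _ = ε := add_halves ε

lemma self_mul_mem_sgen_shrink (hh : h ∈ C0S X) (hδ : 0 < δ)
    (hg : g ∈ sgen (CcS X) (shrink δ h)) : h * g ∈ sgen (CcS X) (shrink δ h) := by
  have hk := shrink_mem_CcS hh hδ
  refine (sgen_induction isSubalgS_CcS hk (P := fun g => g ∈ sgen (CcS X) (shrink δ h) ∧
    h * g ∈ sgen (CcS X) (shrink δ h)) ⟨mem_sgen_self, ?_⟩ ?_ ?_ ?_ ?_ hg).2
  · have : h * shrink δ h = shrink δ h * shrink δ h +
        δ • (⟨(|·|), continuous_abs⟩ : C(ℝ, ℝ)).compBCF (shrink δ h) := by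
      ext x
      simp [mul_softThreshold hδ.le]
    rw [this]
    exact add_mem_sgen (mul_mem_sgen mem_sgen_self mem_sgen_self) (smul_mem_sgen _
      (compBCF_mem_sgen isSubalgS_CcS isCompClosed_CcS hk abs_zero mem_sgen_self))
  · rintro f - g - ⟨hf, hhf⟩ ⟨hg, hhg⟩
    exact ⟨add_mem_sgen hf hg, mul_add h f g ▸ add_mem_sgen hhf hhg⟩
  · rintro f - g - ⟨hf, hhf⟩ ⟨hg, hhg⟩
    exact ⟨mul_mem_sgen hf hg, mul_assoc h f g ▸ mul_mem_sgen hhf hg⟩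
  · rintro c f - ⟨hf, hhf⟩
    exact ⟨smul_mem_sgen c hf, (mul_smul_comm c h f).symm ▸ smul_mem_sgen c hhf⟩
  · exact isClosed_sgen.inter (isClosed_sgen.preimage
      ((continuous_const.mul continuous_subtype_val).subtype_mk fun x => mul_mem_CcS h x.2))

lemma mul_mem_sgen_shrink (hh : h ∈ C0S X) (hδ : 0 < δ) (hf : f ∈ sgen (C0S X) h)
    (hg : g ∈ sgen (CcS X) (shrink δ h)) : f * g ∈ sgen (CcS X) (shrink δ h) := by
  refine sgen_induction isSubalgS_C0S hh (P := fun f => ∀ g ∈ sgen (CcS X) (shrink δ h),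
    f * g ∈ sgen (CcS X) (shrink δ h)) (fun g hg => self_mul_mem_sgen_shrink hh hδ hg)
    (fun f _ f' _ hf hf' g hg => add_mul f f' g ▸ add_mem_sgen (hf g hg) (hf' g hg))
    (fun f _ f' _ hf hf' g hg => (mul_assoc f f' g).symm ▸ hf _ (hf' g hg))
    (fun c f _ hf g hg => (smul_mul_assoc c f g).symm ▸ smul_mem_sgen c (hf g hg)) ?_ hf g hg
  have hB := sgen_subset isSubalgS_CcS (shrink_mem_CcS hh hδ)
  have : {x : C0S X | ∀ g ∈ sgen (CcS X) (shrink δ h), x.1 * g ∈ sgen (CcS X) (shrink δ h)} =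
      ⋂ g, ⋂ hg : g ∈ sgen (CcS X) (shrink δ h),
        (fun x : C0S X => (⟨x.1 * g, mul_mem_CcS _ (hB hg)⟩ : CcS X)) ⁻¹'
          {y | y.1 ∈ sgen (CcS X) (shrink δ h)} := by
    ext
    simp
  rw [this]
  exact isClosed_iInter fun g => isClosed_iInter fun hg => isClosed_sgen.preimage
    ((continuous_subtype_val.mul continuous_const).subtype_mk _)

lemma eventually_shrink_mem_sgen_shrink (hh : h ∈ C0S X) (hu : u ∈ sgen (C0S X) h)
    (hε : 0 < ε) : ∀ᶠ δ in 𝓝[>] 0, shrink ε u ∈ sgen (CcS X) (shrink δ h) := by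
  obtain ⟨δ₀, hδ₀, hsmall⟩ : ∃ δ₀ > 0, ∀ x, |h x| < δ₀ → |u x| < ε := by
    have := Metric.tendsto_nhds.1 (tendsto_comap_of_mem_sgen isSubalgS_C0S hh hu) ε hε
    obtain ⟨δ₀, hδ₀, hball⟩ := Metric.eventually_nhds_iff.1 (eventually_comap.1 this)
    exact ⟨δ₀, hδ₀, fun x hx => by simpa using hball (by simpa using hx) x rfl⟩
  filter_upwards [Ioo_mem_nhdsGT (half_pos hδ₀)] with δ ⟨hδ, hδδ₀⟩
  -- `shrink ε u` vanishes where `|h| < δ₀`, and the cutoff `θ ∘ shrink δ h` is `1` elsewhere.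
  let θ : C(ℝ, ℝ) := ⟨fun t => min 1 (|t| / δ), by fun_prop⟩
  have hθ := compBCF_mem_sgen isSubalgS_CcS isCompClosed_CcS (shrink_mem_CcS hh hδ)
    (θ := θ) (by simp [θ]) mem_sgen_self
  convert mul_mem_sgen_shrink hh hδ
    (shrink_mem_sgen isSubalgS_C0S isCompClosed_C0S hh hε.le hu) hθ using 1
  ext x
  by_cases hx : |h x| < δ₀
  · simp [softThreshold_eq_zero (hsmall x hx).le]
  · have := abs_sub_le_abs_softThreshold hδ.le (h x)
    have : 1 ≤ |softThreshold δ (h x)| / δ := (le_div_iff₀ hδ).2 (by linarith)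
    simp [θ, min_eq_left this]

end Multipliers

section ExtensionQLF

variable (ρ : QLF (CcS X))

lemma QLF.extendFun_add (hq : qnorm ρ ≠ ∞) {h f g : X →ᵇ ℝ} (hh : h ∈ C0S X)
    (hf : f ∈ sgen (C0S X) h) (hg : g ∈ sgen (C0S X) h) :
    ρ.extendFun (f + g) = ρ.extendFun f + ρ.extendFun g := by
  have hfg := add_mem_sgen hf hg
  have hbound : ∀ ε > 0, |ρ.toFun (shrink ε (f + g)) - (ρ.toFun (shrink ε f) +
      ρ.toFun (shrink ε g)) - 0| ≤ (qnorm ρ).toReal * 3 * ε := fun ε hε => by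
    obtain ⟨δ, hδ, hfδ, hgδ, hfgδ⟩ := (eventually_mem_nhdsWithin.and <|
      (eventually_shrink_mem_sgen_shrink hh hf hε).and <|
      (eventually_shrink_mem_sgen_shrink hh hg hε).and
      (eventually_shrink_mem_sgen_shrink hh hfg hε)).exists
    have hk := shrink_mem_CcS hh hδ
    rw [sub_zero, ← ρ.add_eq _ hk _ _ hfδ hgδ]
    refine (ρ.abs_apply_sub_apply_le isSubalgS_CcS isCompClosed_CcS hq hk hfgδ
      (add_mem_sgen hfδ hgδ)).trans ?_
    rw [mul_assoc]
    gcongr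
    calc ‖shrink ε (f + g) - (shrink ε f + shrink ε g)‖
        = ‖(shrink ε (f + g) - (f + g)) - (shrink ε f - f) - (shrink ε g - g)‖ := by
          congr 1
          abel
      _ ≤ ε + ε + ε := norm_sub_le_of_le (norm_sub_le_of_le (norm_shrink_sub_self_le hε.le _)
          (norm_shrink_sub_self_le hε.le _)) (norm_shrink_sub_self_le hε.le _)
      _ = 3 * ε := by ring
  have hC := sgen_subset isSubalgS_C0S hh
  refine sub_eq_zero.1 (tendsto_nhds_unique ((ρ.tendsto_extendFun hq (hC hfg)).sub
    ((ρ.tendsto_extendFun hq (hC hf)).add (ρ.tendsto_extendFun hq (hC hg))))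
    (tendsto_nhdsGT_zero_of_abs_sub_le_mul hbound))

noncomputable def QLF.extend (hq : qnorm ρ ≠ ∞) : QLF (C0S X) where
  toFun := ρ.extendFun
  smul_eq a _ hf := ρ.extendFun_smul hq a hf
  add_eq _ hh _ _ hf hg := ρ.extendFun_add hq hh hf hg
  pos _ hf h0 := ρ.extendFun_nonneg hq hf h0

lemma QLF.qnorm_extend (hq : qnorm ρ ≠ ∞) : qnorm (ρ.extend hq) = qnorm ρ := by
  refine le_antisymm (iSup₂_le fun f ⟨hf, h0, h1⟩ => ?_) (iSup₂_le fun f ⟨hf, h0, h1⟩ => ?_)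
  · exact (ENNReal.ofReal_le_iff_le_toReal hq).2 (ρ.extendFun_le_qnorm_toReal hq hf h0 h1)
  · rw [← ρ.extendFun_eq_apply hq hf]
    exact (ρ.extend hq).ofReal_apply_le_qnorm (CcS_subset_C0S hf) h0 h1

end ExtensionQLF

lemma QLF.eq_of_eqOn_CcS (σ₁ σ₂ : QLF (C0S X)) (h₁ : qnorm σ₁ ≠ ∞) (h₂ : qnorm σ₂ ≠ ∞)
    (heq : ∀ f ∈ CcS X, σ₁.toFun f = σ₂.toFun f) {f : X →ᵇ ℝ} (hf : f ∈ C0S X) :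
    σ₁.toFun f = σ₂.toFun f :=
  tendsto_nhds_unique (σ₁.tendsto_apply_shrink isSubalgS_C0S isCompClosed_C0S h₁ hf)
    ((σ₂.tendsto_apply_shrink isSubalgS_C0S isCompClosed_C0S h₂ hf).congr'
      (eventually_nhdsWithin_of_forall fun _ hε => (heq _ (shrink_mem_CcS hf hε)).symm))

lemma sgen_CcS_subset_sgen_C0S {h : X →ᵇ ℝ} (hh : h ∈ CcS X) :
    sgen (CcS X) h ⊆ sgen (C0S X) h := fun _ hf =>
  sgen_induction isSubalgS_CcS hh (P := (· ∈ sgen (C0S X) h)) mem_sgen_self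
    (fun _ _ _ _ => add_mem_sgen) (fun _ _ _ _ => mul_mem_sgen) (fun c _ _ => smul_mem_sgen c)
    (isClosed_sgen.preimage (continuous_inclusion CcS_subset_C0S)) hf

def QLF.restrict {𝔄 𝔅 : Set (X →ᵇ ℝ)} (σ : QLF 𝔅) (h𝔄 : 𝔄 ⊆ 𝔅)
    (hsgen : ∀ h ∈ 𝔄, sgen 𝔄 h ⊆ sgen 𝔅 h) : QLF 𝔄 where
  toFun := σ.toFun
  smul_eq a f hf := σ.smul_eq a f (h𝔄 hf)
  add_eq h hh f g hf hg := σ.add_eq h (h𝔄 hh) f g (hsgen h hh hf) (hsgen h hh hg)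
  pos f hf h0 := σ.pos f (h𝔄 hf) h0

lemma QLF.qnorm_restrict_le {𝔄 𝔅 : Set (X →ᵇ ℝ)} (σ : QLF 𝔅) (h𝔄 : 𝔄 ⊆ 𝔅)
    (hsgen : ∀ h ∈ 𝔄, sgen 𝔄 h ⊆ sgen 𝔅 h) : qnorm (σ.restrict h𝔄 hsgen) ≤ qnorm σ :=
  biSup_mono fun _ hf => ⟨h𝔄 hf.1, hf.2⟩

end

theorem qlf_extension_general {X : Type u} [TopologicalSpace X] :
    (∀ ρ : QLF (CcS X), qnorm ρ ≠ ∞ →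
      ∃ σ : QLF (C0S X), (∀ f ∈ CcS X, σ.toFun f = ρ.toFun f) ∧ qnorm σ = qnorm ρ ∧
        (∀ σ' : QLF (C0S X), qnorm σ' ≠ ∞ → (∀ f ∈ CcS X, σ'.toFun f = ρ.toFun f) →
          ∀ f ∈ C0S X, σ'.toFun f = σ.toFun f)) ∧
    (∀ σ : QLF (C0S X), qnorm σ ≠ ∞ →
      ∃ ρ : QLF (CcS X), qnorm ρ ≠ ∞ ∧ (∀ f ∈ CcS X, ρ.toFun f = σ.toFun f) ∧
        (∀ σ' : QLF (C0S X), qnorm σ' ≠ ∞ → (∀ f ∈ CcS X, σ'.toFun f = σ.toFun f) →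
          ∀ f ∈ C0S X, σ'.toFun f = σ.toFun f)) := by
  refine ⟨fun ρ hq => ⟨ρ.extend hq, fun f hf => ρ.extendFun_eq_apply hq hf, ρ.qnorm_extend hq,
    fun σ' hσ' hagree f hf => ?_⟩, fun σ hq => ⟨σ.restrict CcS_subset_C0S
      fun _ => sgen_CcS_subset_sgen_C0S, ?_, fun _ _ => rfl, fun σ' hσ' hagree f hf => ?_⟩⟩
  · exact σ'.eq_of_eqOn_CcS (ρ.extend hq) hσ' ((ρ.qnorm_extend hq).symm ▸ hq)
      (fun g hg => (hagree g hg).trans (ρ.extendFun_eq_apply hq hg).symm) hf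
  · exact ne_top_of_le_ne_top hq (σ.qnorm_restrict_le _ _)
  · exact σ'.eq_of_eqOn_CcS σ hσ' hq hagree hf

/-- (I) every bounded quasi-linear functional on `C_c(X)` extends uniquely
(among bounded quasi-linear functionals) to a bounded quasi-linear functional on `C₀(X)`
with the same norm; (II) every bounded quasi-linear functional on `C₀(X)` is the unique
bounded extension of its restriction to `C_c(X)`. -/
theorem qlf_extension {X : Type u} [TopologicalSpace X]
    [LocallyCompactSpace X] [T2Space X] [ConnectedSpace X] :
    (∀ ρ : QLF (CcS X), qnorm ρ ≠ ∞ →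
      ∃ σ : QLF (C0S X), (∀ f ∈ CcS X, σ.toFun f = ρ.toFun f) ∧ qnorm σ = qnorm ρ ∧
        (∀ σ' : QLF (C0S X), qnorm σ' ≠ ∞ → (∀ f ∈ CcS X, σ'.toFun f = ρ.toFun f) →
          ∀ f ∈ C0S X, σ'.toFun f = σ.toFun f)) ∧
    (∀ σ : QLF (C0S X), qnorm σ ≠ ∞ →
      ∃ ρ : QLF (CcS X), qnorm ρ ≠ ∞ ∧ (∀ f ∈ CcS X, ρ.toFun f = σ.toFun f) ∧
        (∀ σ' : QLF (C0S X), qnorm σ' ≠ ∞ → (∀ f ∈ CcS X, σ'.toFun f = σ.toFun f) →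
          ∀ f ∈ C0S X, σ'.toFun f = σ.toFun f)) :=
  qlf_extension_general
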